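/- arXiv:1905.06366 — 2 statements merged into one kernel-verified Lean document; each statement's English description precedes it below -/
import Mathlib

section
/- Let A be an m×n real matrix with full column rank and let 𝐀 ∈ ℝ^{2m×n} be the vertical concatenation of A and −A. Then χ(𝐀) = χ(A), where χ(X) := sup over positive diagonal D (of appropriate size) of ‖(XᵀDX)⁻¹XᵀD‖. -/
noncomputable def opNorm {ι κ : Type*} [Fintype ι] [Fintype κ] [DecidableEq κ]
    (A : Matrix ι κ ℝ) : ℝ :=
  ‖LinearMap.toContinuousLinearMap (Matrix.toEuclideanLin A)‖

/-- `χ(X) := sup_{D positive diagonal} ‖(XᵀDX)⁻¹XᵀD‖`, for any finite row index type. -/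
noncomputable def chi {ι : Type*} [Fintype ι] [DecidableEq ι] {n : ℕ}
    (A : Matrix ι (Fin n) ℝ) : ℝ :=
  sSup {c : ℝ | ∃ d : ι → ℝ, (∀ i, 0 < d i) ∧
    c = opNorm ((A.transpose * Matrix.diagonal d * A)⁻¹ * A.transpose * Matrix.diagonal d)}

/-!
Write `W(X, d) = (XᵀDX)⁻¹XᵀD`. For weights `(d₁, d₂)` on the rows of `𝐀 = [A; -A]` one has
`W(𝐀, (d₁, d₂)) = W(A, d₁ + d₂) · [D₁ | -D₂](D₁ + D₂)⁻¹`, and the right factor has operator norm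
at most `1`, so `χ(𝐀) ≤ χ(A)`. Conversely, for the weights `(t d, (1 - t) d)` the restriction of
`W(𝐀, ·)` to the first block of coordinates is `t · W(A, d)`, so `t χ(A) ≤ χ(𝐀)` for every `t < 1`.
-/

open Matrix Filter Topology Set
open scoped Matrix.Norms.L2Operator

theorem Real.sSup_eq_sSup_of_forall_exists_le {S T : Set ℝ} (hS : S.Nonempty)
    (hTS : ∀ t ∈ T, ∃ s ∈ S, t ≤ s) (hST : ∀ s ∈ S, ∀ c ∈ Ioo (0 : ℝ) 1, ∃ t ∈ T, c * s ≤ t) :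
    sSup T = sSup S := by
  have hT : T.Nonempty := by
    obtain ⟨s, hs⟩ := hS
    obtain ⟨t, ht, -⟩ := hST s hs (1 / 2) ⟨by norm_num, by norm_num⟩
    exact ⟨t, ht⟩
  have hbdd : BddAbove T ↔ BddAbove S := by
    constructor
    · rintro ⟨b, hb⟩
      refine ⟨2 * b, fun s hs => ?_⟩
      obtain ⟨t, ht, hst⟩ := hST s hs (1 / 2) ⟨by norm_num, by norm_num⟩
      linarith [hb ht]
    · rintro ⟨b, hb⟩
      refine ⟨b, fun t ht => ?_⟩
      obtain ⟨s, hs, hts⟩ := hTS t ht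
      exact hts.trans (hb hs)
  by_cases hS' : BddAbove S
  · have hT' := hbdd.2 hS'
    refine le_antisymm (csSup_le hT fun t ht => ?_) (csSup_le hS fun s hs => ?_)
    · obtain ⟨s, hs, hts⟩ := hTS t ht
      exact hts.trans (le_csSup hS' hs)
    · have hlim : Tendsto (fun c : ℝ => c * s) (𝓝[<] 1) (𝓝 s) :=
        ((continuous_mul_const s).tendsto' 1 s (one_mul s)).mono_left nhdsWithin_le_nhds
      refine le_of_tendsto hlim ?_
      filter_upwards [Ioo_mem_nhdsLT (zero_lt_one' ℝ)] with c hc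
      obtain ⟨t, ht, hct⟩ := hST s hs c hc
      exact hct.trans (le_csSup hT' ht)
  · rw [Real.sSup_of_not_bddAbove hS', Real.sSup_of_not_bddAbove (mt hbdd.1 hS')]

section

variable {ι κ : Type*} [Fintype ι] [DecidableEq ι]

theorem l2_opNorm_fromCols_diagonal_le_one (a b : ι → ℝ) (h : ∀ i, a i ^ 2 + b i ^ 2 ≤ 1) :
    ‖fromCols (diagonal a) (diagonal b)‖ ≤ 1 := by
  rw [l2_opNorm_def]
  refine ContinuousLinearMap.opNorm_le_bound _ zero_le_one fun x => ?_
  rw [one_mul, EuclideanSpace.norm_eq, EuclideanSpace.norm_eq, Fintype.sum_sum_type,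
    ← Finset.sum_add_distrib]
  gcongr with i
  simp only [LinearEquiv.trans_apply, LinearMap.coe_toContinuousLinearMap', ofLp_toLpLin,
    toLin'_apply, fromCols_mulVec, Pi.add_apply, mulVec_diagonal, Function.comp_apply,
    Real.norm_eq_abs, sq_abs]
  set u := x (Sum.inl i)
  set v := x (Sum.inr i)
  calc (a i * u + b i * v) ^ 2 ≤ (a i ^ 2 + b i ^ 2) * (u ^ 2 + v ^ 2) := by
        nlinarith [sq_nonneg (a i * v - b i * u)]
    _ ≤ u ^ 2 + v ^ 2 := mul_le_of_le_one_left (by positivity) (h i)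

theorem l2_opNorm_fromRows_one_zero_le_one : ‖(fromRows 1 0 : Matrix (ι ⊕ ι) ι ℝ)‖ ≤ 1 := by
  have h := l2_opNorm_fromCols_diagonal_le_one (ι := ι) 1 0 (by simp)
  rw [← l2_opNorm_conjTranspose, conjTranspose_fromCols_eq_fromRows_conjTranspose] at h
  simpa using h

variable (A : Matrix ι κ ℝ)

theorem transpose_fromRows_neg_mul_diagonal (d₁ d₂ : ι → ℝ) :
    (fromRows A (-A))ᵀ * diagonal (Sum.elim d₁ d₂) =
      fromCols (Aᵀ * diagonal d₁) (-(Aᵀ * diagonal d₂)) := by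
  ext j (i | i) <;> simp [mul_diagonal]

theorem transpose_fromRows_neg_mul_diagonal_mul (d₁ d₂ : ι → ℝ) :
    (fromRows A (-A))ᵀ * diagonal (Sum.elim d₁ d₂) * fromRows A (-A) =
      Aᵀ * diagonal (d₁ + d₂) * A := by
  rw [transpose_fromRows_neg_mul_diagonal, fromCols_mul_fromRows, Matrix.neg_mul, Matrix.mul_neg,
    neg_neg, ← Matrix.add_mul, ← Matrix.mul_add, diagonal_add]
  rfl

variable [Fintype κ] [DecidableEq κ]

noncomputable def weightedPinv (d : ι → ℝ) : Matrix κ ι ℝ :=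
  (Aᵀ * diagonal d * A)⁻¹ * Aᵀ * diagonal d

theorem weightedPinv_fromRows_neg {d₁ d₂ : ι → ℝ} (hd : ∀ i, d₁ i + d₂ i ≠ 0) :
    weightedPinv (fromRows A (-A)) (Sum.elim d₁ d₂) =
      weightedPinv A (d₁ + d₂) *
        fromCols (diagonal (d₁ / (d₁ + d₂))) (diagonal (-d₂ / (d₁ + d₂))) := by
  have hcols : Aᵀ * diagonal (d₁ + d₂) *
      fromCols (diagonal (d₁ / (d₁ + d₂))) (diagonal (-d₂ / (d₁ + d₂))) =
      fromCols (Aᵀ * diagonal d₁) (-(Aᵀ * diagonal d₂)) := by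
    have hmul (e : ι → ℝ) : (fun i => (d₁ + d₂) i * (e / (d₁ + d₂)) i) = e :=
      funext fun i => mul_div_cancel₀ _ (hd i)
    rw [Matrix.mul_assoc, mul_fromCols, diagonal_mul_diagonal, diagonal_mul_diagonal, hmul, hmul,
      mul_fromCols, ← Matrix.mul_neg, diagonal_neg]
    rfl
  rw [weightedPinv, weightedPinv, transpose_fromRows_neg_mul_diagonal_mul, Matrix.mul_assoc,
    transpose_fromRows_neg_mul_diagonal, ← hcols]
  simp only [Matrix.mul_assoc]

theorem norm_weightedPinv_fromRows_neg_le {d₁ d₂ : ι → ℝ} (hd₁ : ∀ i, 0 < d₁ i)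
    (hd₂ : ∀ i, 0 < d₂ i) :
    ‖weightedPinv (fromRows A (-A)) (Sum.elim d₁ d₂)‖ ≤ ‖weightedPinv A (d₁ + d₂)‖ := by
  have hsum (i : ι) : 0 < d₁ i + d₂ i := add_pos (hd₁ i) (hd₂ i)
  rw [weightedPinv_fromRows_neg A fun i => (hsum i).ne']
  refine (l2_opNorm_mul _ _).trans (mul_le_of_le_one_right (norm_nonneg _) ?_)
  refine l2_opNorm_fromCols_diagonal_le_one _ _ fun i => ?_
  simp only [Pi.div_apply, Pi.add_apply, Pi.neg_apply]
  rw [div_pow, div_pow, ← add_div, div_le_one (pow_pos (hsum i) 2)]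
  nlinarith [mul_pos (hd₁ i) (hd₂ i)]

theorem weightedPinv_fromRows_neg_mul_fromRows_one_zero {d : ι → ℝ} (hd : ∀ i, d i ≠ 0)
    (t : ℝ) :
    weightedPinv (fromRows A (-A)) (Sum.elim (t • d) ((1 - t) • d)) *
        (fromRows 1 0 : Matrix (ι ⊕ ι) ι ℝ) = t • weightedPinv A d := by
  have hsum : t • d + (1 - t) • d = d := by rw [← add_smul, add_sub_cancel, one_smul]
  have hfrac : t • d / d = fun _ => t := funext fun i => mul_div_cancel_right₀ t (hd i)
  rw [weightedPinv_fromRows_neg A fun i => by rw [← Pi.add_apply, hsum]; exact hd i, hsum,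
    Matrix.mul_assoc, fromCols_mul_fromRows, Matrix.mul_one, Matrix.mul_zero, add_zero, hfrac,
    ← smul_one_eq_diagonal, Matrix.mul_smul, Matrix.mul_one]

theorem mul_norm_weightedPinv_le {d : ι → ℝ} (hd : ∀ i, 0 < d i) {t : ℝ} (ht : t ∈ Ioo 0 1) :
    t * ‖weightedPinv A d‖ ≤
      ‖weightedPinv (fromRows A (-A)) (Sum.elim (t • d) ((1 - t) • d))‖ := by
  calc t * ‖weightedPinv A d‖ = ‖t • weightedPinv A d‖ := by
        rw [norm_smul t (weightedPinv A d), Real.norm_of_nonneg ht.1.le]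
    -- without the ascription, `*` elaborates to the multiplication of `CStarMatrix`
    _ = ‖weightedPinv (fromRows A (-A)) (Sum.elim (t • d) ((1 - t) • d)) *
          (fromRows 1 0 : Matrix (ι ⊕ ι) ι ℝ)‖ := by
        rw [weightedPinv_fromRows_neg_mul_fromRows_one_zero A fun i => (hd i).ne']
    _ ≤ _ := (l2_opNorm_mul _ _).trans
        (mul_le_of_le_one_right (norm_nonneg _) l2_opNorm_fromRows_one_zero_le_one)

end

theorem chi_eq_sSup_norm_weightedPinv {ι : Type*} [Fintype ι] [DecidableEq ι] {n : ℕ}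
    (A : Matrix ι (Fin n) ℝ) :
    chi A = sSup {c : ℝ | ∃ d : ι → ℝ, (∀ i, 0 < d i) ∧ c = ‖weightedPinv A d‖} :=
  rfl

theorem stmt15_general {m n : ℕ} (A : Matrix (Fin m) (Fin n) ℝ) :
    chi (Matrix.fromRows A (-A)) = chi A := by
  rw [chi_eq_sSup_norm_weightedPinv, chi_eq_sSup_norm_weightedPinv]
  refine Real.sSup_eq_sSup_of_forall_exists_le ⟨_, fun _ => 1, fun _ => one_pos, rfl⟩ ?_ ?_
  · rintro _ ⟨d, hd, rfl⟩
    refine ⟨_, ⟨d ∘ Sum.inl + d ∘ Sum.inr, fun i => add_pos (hd _) (hd _), rfl⟩, ?_⟩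
    have h := norm_weightedPinv_fromRows_neg_le (d₁ := d ∘ Sum.inl) (d₂ := d ∘ Sum.inr) A
      (fun i => hd _) (fun i => hd _)
    rwa [Sum.elim_comp_inl_inr] at h
  · rintro _ ⟨d, hd, rfl⟩ t ht
    refine ⟨_, ⟨Sum.elim (t • d) ((1 - t) • d), ?_, rfl⟩, mul_norm_weightedPinv_le A hd ht⟩
    rintro (i | i)
    · exact mul_pos ht.1 (hd i)
    · exact mul_pos (sub_pos.2 ht.2) (hd i)

theorem stmt15 {m n : ℕ} (A : Matrix (Fin m) (Fin n) ℝ)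
    (hA : LinearIndependent ℝ (fun j : Fin n => fun i : Fin m => A i j)) :
    chi (Matrix.fromRows A (-A)) = chi A :=
  stmt15_general A
end

section
/- Let A be an m×n real matrix with full column rank, S a signature matrix, and J ⊆ [m] with A_J invertible. If v̂ ∈ ℝ^J attains max{‖v‖ : ‖A_Jᵀv‖ = 1} and S is chosen with S_{ii} = sign(v̂ᵢ) for i ∈ J, then u := S_J v̂ satisfies u ≥ 0, ‖(S_J A_J)ᵀ u‖ = 1, and ‖u‖ = ‖A_J⁻¹‖. Consequently max{‖w‖ : w ∈ ℝ^J₊, ‖(S_J A_J)ᵀ w‖ = 1} ≥ ‖A_J⁻¹‖. -/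
noncomputable def evnorm {ι : Type*} [Fintype ι] (v : ι → ℝ) : ℝ :=
  ‖(WithLp.equiv 2 (ι → ℝ)).symm v‖

/-! The maximiser `v̂` of `‖v‖` on the sphere `‖A_Jᵀ v‖ = 1` has norm `‖A_J⁻ᵀ‖ = ‖A_J⁻¹‖`, since
`v ↦ A_Jᵀ v` maps that sphere onto the unit sphere. Flipping signs by `S_J` changes neither `‖v‖`
nor, once `S_J` is absorbed into the matrix, `‖(S_J A_J)ᵀ v‖`; so `u = S_J v̂ = |v̂|` is a
nonnegative point of the constraint set whose norm is `‖A_J⁻¹‖`, and every other point of that set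
has norm at most `‖v̂‖`. -/

open Matrix

section Norms

variable {ι κ : Type*} [Fintype ι] [Fintype κ]

lemma evnorm_mulVec_le [DecidableEq κ] (M : Matrix ι κ ℝ) (x : κ → ℝ) :
    evnorm (M *ᵥ x) ≤ opNorm M * evnorm x := by
  simpa [evnorm, opNorm] using
    (LinearMap.toContinuousLinearMap (toEuclideanLin M)).le_opNorm
      ((WithLp.equiv 2 (κ → ℝ)).symm x)

lemma opNorm_le_of_evnorm_mulVec_le [DecidableEq κ] (M : Matrix ι κ ℝ) {C : ℝ} (hC : 0 ≤ C)
    (h : ∀ x, evnorm x = 1 → evnorm (M *ᵥ x) ≤ C) : opNorm M ≤ C :=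
  ContinuousLinearMap.opNorm_le_of_unit_norm hC fun x hx => h (WithLp.ofLp x) hx

lemma opNorm_transpose [DecidableEq ι] [DecidableEq κ] (M : Matrix ι κ ℝ) :
    opNorm Mᵀ = opNorm M := by
  rw [opNorm, ← conjTranspose_eq_transpose_of_trivial, toEuclideanLin_conjTranspose_eq_adjoint,
    LinearMap.adjoint_toContinuousLinearMap]
  exact LinearIsometryEquiv.norm_map ContinuousLinearMap.adjoint _

lemma evnorm_mul_of_abs_eq_one {d : ι → ℝ} (hd : ∀ i, |d i| = 1) (x : ι → ℝ) :
    evnorm (fun i => d i * x i) = evnorm x := by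
  simp only [evnorm, EuclideanSpace.norm_eq, WithLp.equiv_symm_apply,
    Real.norm_eq_abs, abs_mul, hd, one_mul]

end Norms

lemma evnorm_eq_opNorm_inv_of_isMaxOn {ι : Type*} [Fintype ι] [DecidableEq ι]
    {M : Matrix ι ι ℝ} (hM : IsUnit M) {x : ι → ℝ} (hx : evnorm (M *ᵥ x) = 1)
    (hmax : IsMaxOn evnorm {v | evnorm (M *ᵥ v) = 1} x) :
    evnorm x = opNorm M⁻¹ := by
  have hdet := (isUnit_iff_isUnit_det M).mp hM
  refine le_antisymm ?_ (opNorm_le_of_evnorm_mulVec_le _ (by unfold evnorm; positivity)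
    fun y hy => hmax ?_)
  · calc evnorm x = evnorm (M⁻¹ *ᵥ (M *ᵥ x)) := by rw [mulVec_mulVec, nonsing_inv_mul _ hdet,
          one_mulVec]
      _ ≤ opNorm M⁻¹ * evnorm (M *ᵥ x) := evnorm_mulVec_le _ _
      _ = opNorm M⁻¹ := by rw [hx, mul_one]
  · rwa [Set.mem_ofPred_eq, mulVec_mulVec, mul_nonsing_inv _ hdet, one_mulVec]

lemma ite_nonneg_mul_self (t : ℝ) : (if 0 ≤ t then 1 else -1) * t = |t| := by
  split_ifs with h
  · rw [one_mul, abs_of_nonneg h]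
  · rw [neg_one_mul, abs_of_neg (not_le.mp h)]

lemma transpose_diagonal_mul_mulVec {ι : Type*} [Fintype ι] [DecidableEq ι] (d : ι → ℝ)
    (B : Matrix ι ι ℝ) (w : ι → ℝ) :
    (diagonal d * B)ᵀ *ᵥ w = Bᵀ *ᵥ fun i => d i * w i := by
  rw [transpose_mul, diagonal_transpose, ← mulVec_mulVec]
  exact congrArg _ (funext (mulVec_diagonal d w))

theorem stmt16_general {m n : ℕ} (r : Fin n → Fin m)
    (B : Matrix (Fin n) (Fin n) ℝ) (hBunit : IsUnit B)
    (vhat : Fin n → ℝ) (hv1 : evnorm (B.transpose.mulVec vhat) = 1)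
    (hvmax : ∀ v : Fin n → ℝ, evnorm (B.transpose.mulVec v) = 1 → evnorm v ≤ evnorm vhat)
    (s : Fin m → ℝ)
    (hsign : ∀ i : Fin n, s (r i) = if 0 ≤ vhat i then 1 else -1)
    (u : Fin n → ℝ) (hu : u = fun i => s (r i) * vhat i) :
    (∀ i, 0 ≤ u i) ∧
    evnorm ((Matrix.diagonal (fun i => s (r i)) * B).transpose.mulVec u) = 1 ∧
    evnorm u = opNorm B⁻¹ ∧
    opNorm B⁻¹ ≤ sSup {c : ℝ | ∃ w : Fin n → ℝ, (∀ i, 0 ≤ w i) ∧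
      evnorm ((Matrix.diagonal (fun i => s (r i)) * B).transpose.mulVec w) = 1 ∧
      c = evnorm w} := by
  have hd : ∀ i, |s (r i)| = 1 := fun i => by rw [hsign]; split_ifs <;> norm_num
  have hu_abs : u = fun i => |vhat i| := by simp only [hu, hsign, ite_nonneg_mul_self]
  have hdu : (fun i => s (r i) * u i) = vhat := funext fun i => by
    rw [hu, ← mul_assoc, ← abs_mul_abs_self, hd, one_mul, one_mul]
  have hvhat : evnorm vhat = opNorm B⁻¹ := by
    rw [← opNorm_transpose, transpose_nonsing_inv]
    exact evnorm_eq_opNorm_inv_of_isMaxOn (isUnit_transpose B |>.mpr hBunit) hv1 hvmax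
  have hu_norm : evnorm u = evnorm vhat := by rw [← hdu, evnorm_mul_of_abs_eq_one hd]
  have hu1 : evnorm (((diagonal fun i => s (r i)) * B)ᵀ *ᵥ u) = 1 := by
    rw [transpose_diagonal_mul_mulVec, hdu, hv1]
  have hu_nonneg : ∀ i, 0 ≤ u i := fun i => hu_abs ▸ abs_nonneg (vhat i)
  refine ⟨hu_nonneg, hu1, hu_norm.trans hvhat, ?_⟩
  rw [← hvhat, ← hu_norm]
  refine le_csSup ⟨evnorm vhat, ?_⟩ ⟨u, hu_nonneg, hu1, rfl⟩
  rintro _ ⟨w, -, hw, rfl⟩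
  rw [transpose_diagonal_mul_mulVec] at hw
  exact evnorm_mul_of_abs_eq_one hd w ▸ hvmax _ hw

theorem stmt16 {m n : ℕ} (A : Matrix (Fin m) (Fin n) ℝ)
    (hA : LinearIndependent ℝ (fun j : Fin n => fun i : Fin m => A i j))
    (r : Fin n → Fin m) (hr : Function.Injective r)
    (B : Matrix (Fin n) (Fin n) ℝ) (hB : B = A.submatrix r id) (hBunit : IsUnit B)
    (vhat : Fin n → ℝ) (hv1 : evnorm (B.transpose.mulVec vhat) = 1)
    (hvmax : ∀ v : Fin n → ℝ, evnorm (B.transpose.mulVec v) = 1 → evnorm v ≤ evnorm vhat)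
    (s : Fin m → ℝ) (hs : ∀ i, s i = 1 ∨ s i = -1)
    (hsign : ∀ i : Fin n, s (r i) = if 0 ≤ vhat i then 1 else -1)
    (u : Fin n → ℝ) (hu : u = fun i => s (r i) * vhat i) :
    (∀ i, 0 ≤ u i) ∧
    evnorm ((Matrix.diagonal (fun i => s (r i)) * B).transpose.mulVec u) = 1 ∧
    evnorm u = opNorm B⁻¹ ∧
    opNorm B⁻¹ ≤ sSup {c : ℝ | ∃ w : Fin n → ℝ, (∀ i, 0 ≤ w i) ∧
      evnorm ((Matrix.diagonal (fun i => s (r i)) * B).transpose.mulVec w) = 1 ∧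
      c = evnorm w} :=
  stmt16_general r B hBunit vhat hv1 hvmax s hsign u hu
end
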